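/- Let X = (x_1 ≥ … ≥ x_N) and Y = (y_1 ≥ … ≥ y_N) be 0-dimensional persistence diagrams with the same number N ≥ 2 of points. If ζ ≥ max(x_l, y_l)/2 and every index m with z_m ≥ max(x_l, y_l)/2 satisfies m ≥ l, then d_B(X,Y) = max(x_l, y_l)/2. -/

import Mathlib

/-!
Put `c = max (x l) (y l) / 2`. Matching the points of index `< l` diagonally and sending the
rest to the diagonal costs at most `c`: the matched pairs have `z i < c` by the hypothesis on the
indices `m`, and the unmatched points die no later than `x l` or `y l`. Conversely
`c ≤ ζ ≤ z l`; if, say, `c = x l / 2`, a matching of cost `< c` must match each of the `l + 1`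
points `x i`, `i ≤ l`, and only to some `y j` with `j < l`, since `y j ≤ y l ≤ x l - c ≤ x i - c`
for `j ≥ l`. This contradicts the pigeonhole principle.
-/

open Classical in
/-- Penalty of each point of the two diagrams under a partial matching `f`:
a point `x i` matched to `y j` incurs `|x i - y j|`; an unmatched `x i`
(matched to the diagonal) incurs `x i / 2`; an unmatched `y j` incurs `y j / 2`
(a `y j` in the range of `f` is already accounted for, so it incurs `0`). -/
noncomputable def diagPenalty {N M : ℕ} (x : Fin N → ℝ) (y : Fin M → ℝ)
    (f : Fin N → Option (Fin M)) : Fin N ⊕ Fin M → ℝ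
  | Sum.inl i => (f i).elim (x i / 2) (fun j => |x i - y j|)
  | Sum.inr j => if ∃ i, f i = some j then 0 else y j / 2

/-- The cost of a partial matching: the maximum of `|x i - y j|` over matched
pairs, of `x i / 2` over unmatched `i`, and of `y j / 2` over unmatched `j`. -/
noncomputable def matchCost {N M : ℕ} (x : Fin N → ℝ) (y : Fin M → ℝ)
    (f : Fin N → Option (Fin M)) : ℝ :=
  ⨆ k, diagPenalty x y f k

/-- `f : Fin N → Option (Fin M)` is a partial matching when it is injective on
matched indices, i.e. it induces a bijection between a subset of `Fin N` and a
subset of `Fin M`. -/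
def IsPartialMatching {N M : ℕ} (f : Fin N → Option (Fin M)) : Prop :=
  ∀ i i' j, f i = some j → f i' = some j → i = i'

/-- The bottleneck distance between two 0-dimensional persistence diagrams,
given by their (decreasing) sequences of death times: the minimum cost over
all partial matchings. -/
noncomputable def bottleneck {N M : ℕ} (x : Fin N → ℝ) (y : Fin M → ℝ) : ℝ :=
  ⨅ f : {f : Fin N → Option (Fin M) // IsPartialMatching f}, matchCost x y f.1

open Finset

theorem Fin.not_forall_le_exists_lt_of_leftUnique {N : ℕ} {R : Fin N → Fin N → Prop}
    (hR : Relator.LeftUnique R) (l : Fin N) : ¬ ∀ i ≤ l, ∃ j < l, R i j := by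
  intro h
  choose! g hgl hgR using h
  have hcard := card_le_card_of_injOn g (s := Iic l) (t := Iio l)
    (fun i hi => mem_Iio.2 (hgl i (mem_Iic.1 hi)))
    (fun i hi i' hi' he => hR (hgR i (mem_Iic.1 hi)) (he ▸ hgR i' (mem_Iic.1 hi')))
  rw [Fin.card_Iic, Fin.card_Iio] at hcard
  omega

section Matching

variable {N M : ℕ} {x : Fin N → ℝ} {y : Fin M → ℝ} {f : Fin N → Option (Fin M)}

theorem diagPenalty_inl_of_eq_none {i : Fin N} (h : f i = none) :
    diagPenalty x y f (.inl i) = x i / 2 := by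
  simp [diagPenalty, h]

theorem diagPenalty_inl_of_eq_some {i : Fin N} {j : Fin M} (h : f i = some j) :
    diagPenalty x y f (.inl i) = |x i - y j| := by
  simp [diagPenalty, h]

theorem diagPenalty_inr_of_matched {j : Fin M} (h : ∃ i, f i = some j) :
    diagPenalty x y f (.inr j) = 0 := by
  simp [diagPenalty, h]

theorem diagPenalty_inr_of_unmatched {j : Fin M} (h : ¬∃ i, f i = some j) :
    diagPenalty x y f (.inr j) = y j / 2 := by
  simp [diagPenalty, h]

theorem diagPenalty_le_matchCost (k : Fin N ⊕ Fin M) :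
    diagPenalty x y f k ≤ matchCost x y f :=
  le_ciSup (Set.finite_range _).bddAbove k

theorem matchCost_le {c : ℝ} (hc : 0 ≤ c) (h : ∀ k, diagPenalty x y f k ≤ c) :
    matchCost x y f ≤ c :=
  Real.iSup_le h hc

theorem bottleneck_eq_of_le_matchCost {c : ℝ}
    (hlow : ∀ f, IsPartialMatching f → c ≤ matchCost x y f)
    (hf : IsPartialMatching f) (hup : matchCost x y f ≤ c) : bottleneck x y = c := by
  have : Nonempty {f : Fin N → Option (Fin M) // IsPartialMatching f} := ⟨⟨f, hf⟩⟩
  refine le_antisymm ((ciInf_le ⟨c, ?_⟩ ⟨f, hf⟩).trans hup) (le_ciInf fun g => hlow g.1 g.2)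
  rintro _ ⟨g, rfl⟩
  exact hlow g.1 g.2

end Matching

section SameSize

variable {N : ℕ} {x y : Fin N → ℝ}

def diagUpTo (l : Fin N) : Fin N → Option (Fin N) :=
  fun i => if i < l then some i else none

theorem diagUpTo_eq_some {l i j : Fin N} : diagUpTo l i = some j ↔ i < l ∧ i = j := by
  simp [diagUpTo]

theorem isPartialMatching_diagUpTo (l : Fin N) : IsPartialMatching (diagUpTo l) :=
  fun _ _ _ hi hi' => (diagUpTo_eq_some.1 hi).2.trans (diagUpTo_eq_some.1 hi').2.symm

theorem matchCost_diagUpTo_le (hx : Antitone x) (hy : Antitone y) {l : Fin N} {c : ℝ}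
    (hc : 0 ≤ c) (hlt : ∀ i < l, |x i - y i| ≤ c) (hxl : x l / 2 ≤ c) (hyl : y l / 2 ≤ c) :
    matchCost x y (diagUpTo l) ≤ c := by
  refine matchCost_le hc ?_
  rintro (i | j)
  · by_cases hil : i < l
    · rw [diagPenalty_inl_of_eq_some (if_pos hil)]
      exact hlt i hil
    · rw [diagPenalty_inl_of_eq_none (if_neg hil)]
      linarith [hx (not_lt.1 hil)]
  · by_cases hjl : j < l
    · rw [diagPenalty_inr_of_matched ⟨j, if_pos hjl⟩]
      exact hc
    · have hunmatched : ¬∃ i, diagUpTo l i = some j := by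
        rintro ⟨i, hi⟩
        obtain ⟨hil, rfl⟩ := diagUpTo_eq_some.1 hi
        exact hjl hil
      rw [diagPenalty_inr_of_unmatched hunmatched]
      linarith [hy (not_lt.1 hjl)]

theorem half_le_matchCost_of_half_le_sub_left (hx : Antitone x) (hy : Antitone y)
    {f : Fin N → Option (Fin N)} (hf : IsPartialMatching f) {l : Fin N}
    (h : x l / 2 ≤ x l - y l) : x l / 2 ≤ matchCost x y f := by
  by_contra! hcost
  have hpen k : diagPenalty x y f k < x l / 2 := (diagPenalty_le_matchCost k).trans_lt hcost
  refine Fin.not_forall_le_exists_lt_of_leftUnique (R := fun i j => f i = some j)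
    (fun _ _ _ => hf _ _ _) l fun i hil => ?_
  have hpi := hpen (.inl i)
  rcases hfi : f i with _ | j
  · rw [diagPenalty_inl_of_eq_none hfi] at hpi
    linarith [hx hil]
  · refine ⟨j, ?_, rfl⟩
    by_contra! hjl
    rw [diagPenalty_inl_of_eq_some hfi] at hpi
    linarith [hx hil, hy hjl, le_abs_self (x i - y j)]

theorem half_le_matchCost_of_half_le_sub_right (hx : Antitone x) (hy : Antitone y)
    (f : Fin N → Option (Fin N)) {l : Fin N}
    (h : y l / 2 ≤ y l - x l) : y l / 2 ≤ matchCost x y f := by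
  by_contra! hcost
  have hpen k : diagPenalty x y f k < y l / 2 := (diagPenalty_le_matchCost k).trans_lt hcost
  refine Fin.not_forall_le_exists_lt_of_leftUnique (R := fun j i => f i = some j)
    (fun _ _ _ hj hj' => Option.some.inj (hj.symm.trans hj')) l fun j hjl => ?_
  by_cases hmatched : ∃ i, f i = some j
  · obtain ⟨i, hi⟩ := hmatched
    refine ⟨i, ?_, hi⟩
    by_contra! hil
    have hpi := hpen (.inl i)
    rw [diagPenalty_inl_of_eq_some hi] at hpi
    linarith [hx hil, hy hjl, neg_abs_le (x i - y j)]
  · have hpj := hpen (.inr j)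
    rw [diagPenalty_inr_of_unmatched hmatched] at hpj
    linarith [hy hjl]

theorem max_half_le_matchCost (hx : Antitone x) (hy : Antitone y)
    {f : Fin N → Option (Fin N)} (hf : IsPartialMatching f) {l : Fin N}
    (h : max (x l) (y l) / 2 ≤ |x l - y l|) : max (x l) (y l) / 2 ≤ matchCost x y f := by
  rcases le_total (y l) (x l) with hxy | hxy
  · rw [max_eq_left hxy] at h ⊢
    rw [abs_of_nonneg (sub_nonneg.2 hxy)] at h
    exact half_le_matchCost_of_half_le_sub_left hx hy hf h
  · rw [max_eq_right hxy] at h ⊢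
    rw [abs_of_nonpos (sub_nonpos.2 hxy), neg_sub] at h
    exact half_le_matchCost_of_half_le_sub_right hx hy f h

end SameSize

theorem lumawig_lemma2_case3_general {N : ℕ}
    (x y : Fin N → ℝ)
    (hx : Antitone x) (hy : Antitone y)
    (hxpos : ∀ i, 0 < x i)
    (l : Fin N)
    (hl : |x l - y l| = ⨆ i, |x i - y i|)
    (hζ : max (x l) (y l) / 2 ≤ ⨆ i : {i : Fin N // i ≠ l}, |x i.1 - y i.1|)
    (hm : ∀ m : Fin N, max (x l) (y l) / 2 ≤ |x m - y m| → l ≤ m) :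
    bottleneck x y = max (x l) (y l) / 2 := by
  have hc : 0 ≤ max (x l) (y l) / 2 := by linarith [hxpos l, le_max_left (x l) (y l)]
  have hζl : (⨆ i : {i : Fin N // i ≠ l}, |x i.1 - y i.1|) ≤ |x l - y l| :=
    Real.iSup_le (fun i => hl ▸ le_ciSup (f := fun i => |x i - y i|)
      (Set.finite_range _).bddAbove i.1) (abs_nonneg _)
  have hlt : ∀ i < l, |x i - y i| ≤ max (x l) (y l) / 2 :=
    fun i hil => le_of_not_ge fun hi => (hm i hi).not_gt hil
  exact bottleneck_eq_of_le_matchCost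
    (fun f hf => max_half_le_matchCost hx hy hf (hζ.trans hζl)) (isPartialMatching_diagUpTo l)
    (matchCost_diagUpTo_le hx hy hc hlt (by linarith [le_max_left (x l) (y l)])
      (by linarith [le_max_right (x l) (y l)]))

/-- (Lemma 2, case 3.) For diagrams with the same number
`N ≥ 2` of points, if `ζ ≥ max (x l) (y l) / 2` and every index `m` with
`z m ≥ max (x l) (y l) / 2` satisfies `m ≥ l`, then
`d_B(X,Y) = max (x l) (y l) / 2`. -/
theorem lumawig_lemma2_case3 {N : ℕ} (hN : 2 ≤ N)
    (x y : Fin N → ℝ)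
    (hx : Antitone x) (hy : Antitone y)
    (hxpos : ∀ i, 0 < x i) (hypos : ∀ i, 0 < y i)
    (l : Fin N)
    (hl : |x l - y l| = ⨆ i, |x i - y i|)
    (hlleast : ∀ i, |x i - y i| = (⨆ j, |x j - y j|) → l ≤ i)
    (hζ : max (x l) (y l) / 2 ≤ ⨆ i : {i : Fin N // i ≠ l}, |x i.1 - y i.1|)
    (hm : ∀ m : Fin N, max (x l) (y l) / 2 ≤ |x m - y m| → l ≤ m) :
    bottleneck x y = max (x l) (y l) / 2 :=
  lumawig_lemma2_case3_general x y hx hy hxpos l hl hζ hm
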